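/- Let V be a projective subvariety of ℙⁿ(ℂ) of dimension k, let Q_1,…,Q_q be hypersurfaces of ℙⁿ(ℂ) of common degree d, and let M = H_V(d) − 1. Then there exist M − k hypersurfaces T_1,…,T_{M−k} of degree d in ℙⁿ(ℂ) such that for any subset R ⊂ {1,…,q} with ♯R = k+1 and rank{[Q_i]}_{i∈R} = k+1 in I_d(V), the classes {[Q_i]}_{i∈R} ∪ {[T_i]}_{i=1}^{M−k} have rank M+1 in I_d(V). -/

import Mathlib

open MvPolynomial Metric Set MeasureTheory Filter
open scoped Classical

noncomputable section

/-! ### Projective space, varieties, Hilbert functions -/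

abbrev CVec (n : ℕ) := EuclideanSpace ℂ (Fin (n+1))
abbrev Pn (n : ℕ) := Projectivization ℂ (CVec n)

/-- Evaluation of a (homogeneous) polynomial at the chosen representative of a projective point. -/
def evalRep {n : ℕ} (Q : MvPolynomial (Fin (n+1)) ℂ) (x : Pn n) : ℂ :=
  eval (fun i => x.rep i) Q

/-- The zero locus in `ℙⁿ(ℂ)` of a homogeneous polynomial `Q`. -/
def projZeroLocus {n : ℕ} (Q : MvPolynomial (Fin (n+1)) ℂ) : Set (Pn n) :=
  {x | evalRep Q x = 0}

/-- Degree-`d` homogeneous polynomials vanishing on `V`. -/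
def vanishingSub (n d : ℕ) (V : Set (Pn n)) :
    Submodule ℂ (homogeneousSubmodule (Fin (n+1)) ℂ d) where
  carrier := {Q | ∀ x ∈ V, evalRep (Q : MvPolynomial (Fin (n+1)) ℂ) x = 0}
  add_mem' := by
    intro a b ha hb x hx
    simp only [evalRep, Submodule.coe_add, map_add] at *
    rw [ha x hx, hb x hx]; ring
  zero_mem' := by intro x hx; simp [evalRep]
  smul_mem' := by
    intro c a ha x hx
    simp only [evalRep, Submodule.coe_smul, smul_eval] at *
    rw [ha x hx]; ring

/-- `I_d(V)`: degree-`d` part of the homogeneous coordinate ring of `V`. -/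
def IdV (n d : ℕ) (V : Set (Pn n)) :=
  (homogeneousSubmodule (Fin (n+1)) ℂ d) ⧸ (vanishingSub n d V)

instance (n d : ℕ) (V : Set (Pn n)) : AddCommGroup (IdV n d V) :=
  inferInstanceAs (AddCommGroup ((homogeneousSubmodule (Fin (n+1)) ℂ d) ⧸ (vanishingSub n d V)))
instance (n d : ℕ) (V : Set (Pn n)) : Module ℂ (IdV n d V) :=
  inferInstanceAs (Module ℂ ((homogeneousSubmodule (Fin (n+1)) ℂ d) ⧸ (vanishingSub n d V)))

/-- The Hilbert function `H_V(d) = dim I_d(V)`. -/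
def HV (n d : ℕ) (V : Set (Pn n)) : ℕ := Module.finrank ℂ (IdV n d V)

/-- The class `[Q]` of a degree-`d` homogeneous polynomial in `I_d(V)` (junk value `0` otherwise). -/
def clsOf (n d : ℕ) (V : Set (Pn n)) (Q : MvPolynomial (Fin (n+1)) ℂ) : IdV n d V :=
  if h : Q ∈ homogeneousSubmodule (Fin (n+1)) ℂ d then
    Submodule.Quotient.mk (⟨Q, h⟩ : homogeneousSubmodule (Fin (n+1)) ℂ d) else 0

/-- The rank of the family of classes `[Q i]`, `i ∈ R`, in `I_d(V)`. -/
def clsRank (n d : ℕ) (V : Set (Pn n)) {q : ℕ} (Q : Fin q → MvPolynomial (Fin (n+1)) ℂ)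
    (R : Finset (Fin q)) : ℕ :=
  Module.finrank ℂ ↥(Submodule.span ℂ ((fun i => clsOf n d V (Q i)) '' R))

/-- A family of hypersurfaces is in `N`-subgeneral position with respect to `V`. -/
def InSubgeneralPos {n : ℕ} (V : Set (Pn n)) (N : ℕ) {q : ℕ}
    (Q : Fin q → MvPolynomial (Fin (n+1)) ℂ) : Prop :=
  ∀ I : Finset (Fin q), I.card = N + 1 → (V ∩ ⋂ i ∈ I, projZeroLocus (Q i)) = ∅

/-- An algebraic subset of `ℙⁿ(ℂ)` (common zero set of homogeneous polynomials). -/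
def IsAlgSet {n : ℕ} (W : Set (Pn n)) : Prop :=
  ∃ T : Set (MvPolynomial (Fin (n+1)) ℂ),
    (∀ Q ∈ T, ∃ d, Q ∈ homogeneousSubmodule (Fin (n+1)) ℂ d) ∧
    W = {x | ∀ Q ∈ T, evalRep Q x = 0}

/-- An irreducible algebraic subset of `ℙⁿ(ℂ)`. -/
def IsIrredAlgSet {n : ℕ} (W : Set (Pn n)) : Prop :=
  IsAlgSet W ∧ W.Nonempty ∧
  ∀ W₁ W₂ : Set (Pn n), IsAlgSet W₁ → IsAlgSet W₂ → W ⊆ W₁ ∪ W₂ → W ⊆ W₁ ∨ W ⊆ W₂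

/-- `V` has dimension `k`: there is a strict chain of `k+1` irreducible algebraic subsets of `V`
and no strict chain of `k+2` of them. -/
def HasDim {n : ℕ} (V : Set (Pn n)) (k : ℕ) : Prop :=
  (∃ W : Fin (k+1) → Set (Pn n),
      (∀ i, IsIrredAlgSet (W i)) ∧ StrictMono W ∧ W (Fin.last k) ⊆ V) ∧
  ¬ (∃ W : Fin (k+2) → Set (Pn n),
      (∀ i, IsIrredAlgSet (W i)) ∧ StrictMono W ∧ W (Fin.last (k+1)) ⊆ V)

/-- A holomorphic curve (given abstractly on a set `A`) is nondegenerate over `I_d(V)`: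
no hypersurface of degree `d` not containing `V` contains the image. -/
def NondegenerateOver {n : ℕ} (d : ℕ) (V : Set (Pn n)) {α : Type*} (f : α → Pn n)
    (A : Set α) : Prop :=
  ∀ Q ∈ homogeneousSubmodule (Fin (n+1)) ℂ d,
    (∃ x ∈ V, evalRep Q x ≠ 0) → ∃ a ∈ A, evalRep Q (f a) ≠ 0

/-- The Nochka weights (with Nochka constant `ωt`) attached to a family of hypersurfaces of common
degree `d` in `N`-subgeneral position with respect to a `k`-dimensional `V` (cf. Lemma 2.3). -/
def IsNochkaWeights (n k N : ℕ) (d : ℕ) (V : Set (Pn n)) {q : ℕ}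
    (Q : Fin q → MvPolynomial (Fin (n+1)) ℂ) (ω : Fin q → ℝ) (ωt : ℝ) : Prop :=
  (∀ i, 0 < ω i ∧ ω i ≤ 1) ∧
  (∀ i, ω i ≤ ωt) ∧ (∃ i, ω i = ωt) ∧
  (∑ i, ω i = ωt * ((q : ℝ) - 2*N + k - 1) + k + 1) ∧
  (((k : ℝ)+1)/(2*N - k + 1) ≤ ωt ∧ ωt ≤ (k : ℝ)/N) ∧
  (∀ R : Finset (Fin q), R.card = N + 1 → ∑ i ∈ R, ω i ≤ (k : ℝ) + 1) ∧
  (∀ E : Fin q → ℝ, (∀ i, 1 ≤ E i) → ∀ R : Finset (Fin q), R.card = N + 1 →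
    ∃ Ro ⊆ R, Ro.card = k + 1 ∧ clsRank n d V Q Ro = k + 1 ∧
      ∏ i ∈ R, E i ^ (ω i) ≤ ∏ i ∈ Ro, E i)

/-! ### Basic one-variable complex analysis gadgets -/

/-- Order of vanishing of a function at a point (for holomorphic functions this is the usual
vanishing order; `sInf ∅ = 0`). -/
def vanishOrder (g : ℂ → ℂ) (z : ℂ) : ℕ := sInf {k | iteratedDeriv k g z ≠ 0}

/-- The Laplacian of a real-valued function on `ℂ` (junk value where not differentiable). -/
def lapl (φ : ℂ → ℝ) (z : ℂ) : ℝ :=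
  fderiv ℝ (fun w => fderiv ℝ φ w 1) z 1 +
    fderiv ℝ (fun w => fderiv ℝ φ w Complex.I) z Complex.I

/-- Test functions supported in `D`. -/
structure IsTestFun (φ : ℂ → ℝ) (D : Set ℂ) : Prop where
  smooth : ContDiff ℝ (⊤ : ℕ∞) φ
  cpt : HasCompactSupport φ
  supp : tsupport φ ⊆ D

/-- Pairing of the current `dd^c[u]` with a test function `φ`, normalized so that
`⟨dd^c[log |g|²], φ⟩ = ∑_{g(a)=0} ord_a(g) φ(a)` (Poincaré–Lelong). -/
def ddcPair (u φ : ℂ → ℝ) : ℝ := (4 * Real.pi)⁻¹ * ∫ z, u z * lapl φ z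

/-- Pairing of (the current of integration over) a divisor with a test function. -/
def divPair (ν : ℂ → ℝ) (φ : ℂ → ℝ) : ℝ := ∑ᶠ z, ν z * φ z

/-- Harmonicity on a subset of `ℂ`: locally the real part of a holomorphic function. -/
def HarmonicLocal (h : ℂ → ℝ) (s : Set ℂ) : Prop :=
  ∀ z ∈ s, ∃ ε > 0, ∃ Fh : ℂ → ℂ, DifferentiableOn ℂ Fh (ball z ε) ∧
    ∀ w ∈ ball z ε ∩ s, h w = (Fh w).re

/-- A continuous `[-∞,∞)`-valued subharmonic function on a subset of `ℂ`
(via the harmonic-majorant characterization). -/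
def SubharmonicE (u : ℂ → EReal) (s : Set ℂ) : Prop :=
  ContinuousOn u s ∧
  ∀ (z : ℂ) (r : ℝ), 0 < r → closedBall z r ⊆ s →
    ∀ h : ℂ → ℝ, ContinuousOn h (closedBall z r) → HarmonicLocal h (ball z r) →
      (∀ w ∈ sphere z r, u w ≤ ((h w : ℝ) : EReal)) →
      ∀ w ∈ closedBall z r, u w ≤ ((h w : ℝ) : EReal)

/-- A function with mild singularities on `D ⊆ ℂ`. -/
def MildSing (kf : ℂ → ℝ) (D : Set ℂ) : Prop :=
  ∃ E : Set ℂ,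
    (∀ z ∈ D, ∃ U ∈ nhds z, ∀ w ∈ U ∩ E, w = z) ∧
    ContDiffOn ℝ (⊤ : ℕ∞) kf (D \ E) ∧
    ∀ a ∈ D, ∃ U ∈ nhds a, ∃ (α : ℝ) (Nq : ℕ) (r : Fin Nq → ℝ)
      (gg : Fin Nq → ℂ → ℂ) (vv : Fin Nq → ℂ → ℝ) (kstar : ℂ → ℝ),
      (∀ j, r j ≤ 0) ∧
      (∀ j, DifferentiableOn ℂ (gg j) U ∧ gg j a = 0 ∧ ∃ w ∈ U, gg j w ≠ 0) ∧
      ContDiffOn ℝ (⊤ : ℕ∞) kstar U ∧ (∀ w ∈ U, 0 < kstar w) ∧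
      (∀ j, ContDiffOn ℝ (⊤ : ℕ∞) (vv j) U ∧ ∀ w ∈ U, 0 < vv j w) ∧
      ∀ w ∈ (U ∩ D) \ E, |kf w| = ‖w - a‖ ^ α * kstar w *
        ∏ j, |Real.log (1 / (‖gg j w‖ * vv j w))| ^ (r j)

/-! ### Nevanlinna theory on the punctured disk `Δ_{s,∞} = {s ≤ |z|}` -/

/-- The punctured disk `Δ_{s,∞}` (neighborhood of infinity). -/
def annulus (s : ℝ) : Set ℂ := {z | s ≤ ‖z‖}

/-- Mean of a function over the circle of radius `r`. -/
def circleMean (h : ℂ → ℝ) (r : ℝ) : ℝ :=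
  (∫ θ in (0:ℝ)..(2*Real.pi), h ((r : ℂ) * Complex.exp (θ * Complex.I))) / (2*Real.pi)

/-- Nevanlinna characteristic of a curve with (reduced) representation `F`. -/
def Tchar {n : ℕ} (F : ℂ → CVec n) (r s : ℝ) : ℝ :=
  circleMean (fun z => Real.log ‖F z‖) r - circleMean (fun z => Real.log ‖F z‖) s

/-- Unintegrated counting function `n(t,s)` of a divisor. -/
def countFn (ν : ℂ → ℝ) (s t : ℝ) : ℝ :=
  ∑ᶠ z ∈ {z : ℂ | s ≤ ‖z‖ ∧ ‖z‖ ≤ t}, ν z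

/-- Integrated counting function `N(r,s,ν)`. -/
def Ncount (ν : ℂ → ℝ) (r s : ℝ) : ℝ := ∫ t in s..r, countFn ν s t / t

/-- Integrated counting function truncated at level `p`. -/
def NcountT (p : ℕ) (ν : ℂ → ℕ) (r s : ℝ) : ℝ :=
  Ncount (fun z => ((min p (ν z) : ℕ) : ℝ)) r s

/-- Positive part of the logarithm. -/
def posLog (x : ℝ) : ℝ := Real.log (max 1 x)

/-- Proximity function `m(r,s,φ)` of a meromorphic function. -/
def proxFn (φf : ℂ → ℂ) (r s : ℝ) : ℝ :=
  circleMean (fun z => posLog (‖φf z‖)) r -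
    circleMean (fun z => posLog (‖φf z‖)) s

/-- A reduced representation of a holomorphic curve `f` on an open set `U`. -/
structure ReducedRep {n : ℕ} (f : ℂ → Pn n) (F : ℂ → CVec n) (U : Set ℂ) : Prop where
  isOpen : IsOpen U
  holo : ∀ i, DifferentiableOn ℂ (fun z => F z i) U
  nonzero : ∀ z ∈ U, F z ≠ 0
  represents : ∀ z ∈ U, ∀ h : F z ≠ 0, f z = Projectivization.mk ℂ (F z) h

/-- The pullback divisor `ν_{Q(f)}` computed from a representation `F`. -/
def pullbackDiv {n : ℕ} (F : ℂ → CVec n) (Q : MvPolynomial (Fin (n+1)) ℂ) (z : ℂ) : ℕ :=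
  vanishOrder (fun w => eval (fun i => F w i) Q) z

/-! ### Contact functions (Fujimoto) -/

/-- The Wronskian of the functions `v_{idx 0}(F), …, v_{idx (p-1)}(F)` at `z`. -/
def Wtuple {n M : ℕ} (vs : Fin (M+1) → MvPolynomial (Fin (n+1)) ℂ)
    (F : ℂ → CVec n) {p : ℕ} (idx : Fin p → Fin (M+1)) (z : ℂ) : ℂ :=
  Matrix.det (Matrix.of fun i j : Fin p =>
    iteratedDeriv (i : ℕ) (fun w => eval (fun t => F w t) (vs (idx j))) z)

/-- `|F_{𝒱,p}|²`, the squared norm of `F_𝒱^{(0)} ∧ ⋯ ∧ F_𝒱^{(p)}`. -/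
def FpNormSq {n M : ℕ} (vs : Fin (M+1) → MvPolynomial (Fin (n+1)) ℂ)
    (F : ℂ → CVec n) (p : ℕ) (z : ℂ) : ℝ :=
  ∑ s ∈ ((Finset.univ : Finset (Fin (M+1))).powersetCard (p+1)).attach,
    ‖Wtuple vs F (fun j => ((s.1.orderIsoOfFin
        ((Finset.mem_powersetCard.mp s.2).2) j : s.1) : Fin (M+1))) z‖^2

/-- `|F_{𝒱,p}|`. -/
def FpNorm {n M : ℕ} (vs : Fin (M+1) → MvPolynomial (Fin (n+1)) ℂ)
    (F : ℂ → CVec n) (p : ℕ) (z : ℂ) : ℝ :=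
  Real.sqrt (FpNormSq vs F p z)

/-- `|F_{𝒱,p}(Q)|²` where the hypersurface `Q` has coefficient vector `a` in the basis `𝒱`. -/
def FpQNormSq {n M : ℕ} (vs : Fin (M+1) → MvPolynomial (Fin (n+1)) ℂ)
    (F : ℂ → CVec n) (a : Fin (M+1) → ℂ) (p : ℕ) (z : ℂ) : ℝ :=
  ∑ s ∈ ((Finset.univ : Finset (Fin (M+1))).powersetCard (p+1)).attach,
    ‖∑ l, a l * Wtuple vs F (Fin.cons l (fun j => ((s.1.orderIsoOfFin
        ((Finset.mem_powersetCard.mp s.2).2) j : s.1) : Fin (M+1)))) z‖^2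

/-- `|F_{𝒱,p}(Q)|`. -/
def FpQNorm {n M : ℕ} (vs : Fin (M+1) → MvPolynomial (Fin (n+1)) ℂ)
    (F : ℂ → CVec n) (a : Fin (M+1) → ℂ) (p : ℕ) (z : ℂ) : ℝ :=
  Real.sqrt (FpQNormSq vs F a p z)

/-- The `p`-th contact function `φ_{𝒱,p}(Q) = |F_{𝒱,p}(Q)|/|F_{𝒱,p}|`. -/
def contactFn {n M : ℕ} (vs : Fin (M+1) → MvPolynomial (Fin (n+1)) ℂ)
    (F : ℂ → CVec n) (a : Fin (M+1) → ℂ) (p : ℕ) (z : ℂ) : ℝ :=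
  FpQNorm vs F a p z / FpNorm vs F p z

/-- `F` (a reduced representation of a curve) is nondegenerate over `I_d(V)` w.r.t. the
basis `𝒱 = (v_0,…,v_M)`: the functions `v_i(F)` are linearly independent on `D`. -/
def NondegRep {n M : ℕ} (vs : Fin (M+1) → MvPolynomial (Fin (n+1)) ℂ)
    (F : ℂ → CVec n) (D : Set ℂ) : Prop :=
  ∀ c : Fin (M+1) → ℂ, (∀ z ∈ D, ∑ i, c i * eval (fun t => F z t) (vs i) = 0) → c = 0

/-- `σ_p = p(p+1)/2`. -/
def sigmaC (p : ℕ) : ℝ := (p * (p+1) : ℕ) / 2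

/-- `τ_M = ∑_{p=1}^M σ_p`. -/
def tauC (M : ℕ) : ℝ := ∑ p ∈ Finset.range (M+1), sigmaC p

/-- `𝒱 = ([v_0],…,[v_M])` is an ordered `ℂ`-basis of `I_d(V)` consisting of classes of
honest degree-`d` homogeneous polynomials `v_i`. -/
structure IsBasisOfIdV (n d : ℕ) (V : Set (Pn n)) {M : ℕ}
    (vs : Fin (M+1) → MvPolynomial (Fin (n+1)) ℂ) : Prop where
  homog : ∀ i, vs i ∈ homogeneousSubmodule (Fin (n+1)) ℂ d
  indep : LinearIndependent ℂ (fun i => clsOf n d V (vs i))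
  spans : ⊤ ≤ Submodule.span ℂ (Set.range (fun i => clsOf n d V (vs i)))

/-! ### Riemann surfaces and minimal surfaces in ℝ^m -/

/-- An atlas of holomorphically compatible charts making `S` a Riemann surface. -/
structure RiemannSurface (S : Type) [TopologicalSpace S] where
  charts : Set (PartialHomeomorph S ℂ)
  chartAt : S → PartialHomeomorph S ℂ
  chartAt_mem : ∀ p, chartAt p ∈ charts
  mem_chartAt : ∀ p, p ∈ (chartAt p).source
  holo : ∀ e ∈ charts, ∀ e' ∈ charts,
    DifferentiableOn ℂ (e' ∘ e.symm) (e.target ∩ e.symm ⁻¹' e'.source)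

/-- The (local) vector `∂x/∂z = ((∂x_i/∂z))_i` of an immersion `x : S → ℝ^{n+1}` in the chart `e`,
computed at a point `w` of the chart target. -/
def gaussVec {n : ℕ} {S : Type} [TopologicalSpace S]
    (x : S → EuclideanSpace ℝ (Fin (n+1))) (e : PartialHomeomorph S ℂ) (w : ℂ) : CVec n :=
  WithLp.toLp 2 fun i =>
    (((fderiv ℝ (fun u => x (e.symm u) i) w) 1 : ℝ) -
      Complex.I * ((fderiv ℝ (fun u => x (e.symm u) i) w) Complex.I)) / 2

/-- `x : S → ℝ^{n+1}` is a conformal (isothermal) minimal immersion: in every chart the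
coordinates are smooth with holomorphic `∂x/∂z`, conformality `∑ (∂x_i/∂z)² = 0` holds and
`∂x/∂z ≠ 0` (immersion). -/
structure IsMinimalImmersion {n : ℕ} {S : Type} [TopologicalSpace S]
    (RS : RiemannSurface S) (x : S → EuclideanSpace ℝ (Fin (n+1))) : Prop where
  smooth : ∀ e ∈ RS.charts, ContDiffOn ℝ (⊤ : ℕ∞) (fun w => x (e.symm w)) e.target
  holo : ∀ e ∈ RS.charts, ∀ i, DifferentiableOn ℂ (fun w => gaussVec x e w i) e.target
  conformal : ∀ e ∈ RS.charts, ∀ w ∈ e.target, ∑ i, (gaussVec x e w i)^2 = 0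
  immersion : ∀ e ∈ RS.charts, ∀ w ∈ e.target, gaussVec x e w ≠ 0

/-- Completeness of the induced metric: every divergent curve has infinite length
(the induced length of a curve `γ` on `S` is the Euclidean length of `x ∘ γ`). -/
def IsCompleteImm {n : ℕ} {S : Type} [TopologicalSpace S]
    (x : S → EuclideanSpace ℝ (Fin (n+1))) : Prop :=
  ∀ γ : ℝ → S, ContinuousOn γ (Ici (0:ℝ)) →
    (∀ Kc : Set S, IsCompact Kc → ∃ t₀ : ℝ, ∀ t ≥ t₀, γ t ∉ Kc) →
    eVariationOn (fun t => x (γ t)) (Ici (0:ℝ)) = ⊤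

/-- `g` is the (generalized) Gauss map of the immersion `x`. -/
def IsGaussMap {n : ℕ} {S : Type} [TopologicalSpace S] (RS : RiemannSurface S)
    (x : S → EuclideanSpace ℝ (Fin (n+1))) (g : S → Pn n) : Prop :=
  ∀ e ∈ RS.charts, ∀ p ∈ e.source, ∀ h : gaussVec x e (e p) ≠ 0,
    g p = Projectivization.mk ℂ (gaussVec x e (e p)) h

/-- Density (in a chart) of the total-curvature integrand `-K dA` of a minimal surface,
up to a positive constant: `Δ log ‖∂x/∂z‖²`. -/
def curvDensity {n : ℕ} {S : Type} [TopologicalSpace S]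
    (x : S → EuclideanSpace ℝ (Fin (n+1))) (e : PartialHomeomorph S ℂ) (w : ℂ) : ℝ :=
  lapl (fun u => Real.log (‖gaussVec x e u‖^2)) w

/-- The minimal surface has finite total curvature: `∬_S K dA > -∞`, i.e. the (nonnegative)
density `-K dA` has finite integral over `S`. -/
def FiniteTotalCurvature {n : ℕ} {S : Type} [TopologicalSpace S] (RS : RiemannSurface S)
    (x : S → EuclideanSpace ℝ (Fin (n+1))) : Prop :=
  ∃ C : ℝ, ∀ (t : ℕ) (e : Fin t → PartialHomeomorph S ℂ) (U : Fin t → Set S),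
    (∀ i, e i ∈ RS.charts) → (∀ i, IsOpen (U i)) → (∀ i, U i ⊆ (e i).source) →
    (Pairwise fun i j => Disjoint (U i) (U j)) →
    ∑ i, ∫ w in (e i) '' (U i), curvDensity x (e i) w ≤ C

/-- A global reduced representation `G` of the Gauss map `g`. -/
def IsGlobalRep {n : ℕ} {S : Type} [TopologicalSpace S] (RS : RiemannSurface S)
    (g : S → Pn n) (G : S → CVec n) : Prop :=
  (∀ p, ∃ h : G p ≠ 0, g p = Projectivization.mk ℂ (G p) h) ∧
  (∀ e ∈ RS.charts, ∀ i, DifferentiableOn ℂ (fun w => G (e.symm w) i) e.target)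

/-- Pullback divisor `ν_{Q(g)}` of a hypersurface `Q` under the Gauss map, at `p ∈ S`. -/
def gaussOrd {n : ℕ} {S : Type} [TopologicalSpace S] (RS : RiemannSurface S)
    (x : S → EuclideanSpace ℝ (Fin (n+1))) (Q : MvPolynomial (Fin (n+1)) ℂ) (p : S) : ℕ :=
  vanishOrder (fun w => eval (fun i => gaussVec x (RS.chartAt p) w i) Q) (RS.chartAt p p)

/-! ### Defects of the Gauss map -/

variable {n : ℕ} {S : Type} [TopologicalSpace S]

/-- Condition `(*)_S` in the definition of the `S`-defect `δ^{S,m}_{g,A}(Q)` truncated at level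
`m` for the value `η`: there is a continuous `[-∞,∞)`-valued subharmonic `u (≢ -∞)` on `A` with
`(D1)` `e^u ≤ ‖G‖^{dη}` and `(D2)` at every `ξ ∈ g⁻¹(Q) ∩ A` the function
`u - min{ν_{Q(g)}, m} log|z - ξ|` has a limit in `[-∞,∞)`. -/
def SdefCond {n : ℕ} (RS : RiemannSurface S) (x : S → EuclideanSpace ℝ (Fin (n+1)))
    (g : S → Pn n) (G : S → CVec n) (A : Set S) (mlev d : ℕ)
    (Q : MvPolynomial (Fin (n+1)) ℂ) (η : ℝ) : Prop :=
  ∃ u : S → EReal,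
    (∀ p, u p ≠ ⊤) ∧ (∃ p ∈ A, u p ≠ ⊥) ∧
    (∀ e ∈ RS.charts,
      SubharmonicE (fun w => u (e.symm w)) (e.target ∩ e.symm ⁻¹' A)) ∧
    (∀ p ∈ A, u p ≤ (((d : ℝ) * η * Real.log ‖G p‖ : ℝ) : EReal)) ∧
    (∀ p ∈ A ∩ g ⁻¹' projZeroLocus Q, ∀ e ∈ RS.charts, p ∈ e.source →
      ∃ L : EReal, L ≠ ⊤ ∧
        Filter.Tendsto
          (fun w => u (e.symm w) -
            ((((min (gaussOrd RS x Q p) mlev : ℕ) : ℝ) *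
              Real.log (‖w - e p‖) : ℝ) : EReal))
          (nhdsWithin (e p) {e p}ᶜ) (nhds L))

/-- Condition `(*)_H`: as `(*)_S`, with `u` moreover harmonic on `A ∖ g⁻¹(Q)`. -/
def HdefCond {n : ℕ} (RS : RiemannSurface S) (x : S → EuclideanSpace ℝ (Fin (n+1)))
    (g : S → Pn n) (G : S → CVec n) (A : Set S) (mlev d : ℕ)
    (Q : MvPolynomial (Fin (n+1)) ℂ) (η : ℝ) : Prop :=
  ∃ u : S → EReal,
    (∀ p, u p ≠ ⊤) ∧ (∃ p ∈ A, u p ≠ ⊥) ∧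
    (∀ e ∈ RS.charts,
      SubharmonicE (fun w => u (e.symm w)) (e.target ∩ e.symm ⁻¹' A)) ∧
    -- harmonic on `A ∖ g⁻¹(Q)`: locally the real part of a holomorphic function
    (∀ e ∈ RS.charts, ∀ w₀ ∈ e.target,
      e.symm w₀ ∈ A \ g ⁻¹' projZeroLocus Q →
      ∃ ε > 0, ∃ Fh : ℂ → ℂ, DifferentiableOn ℂ Fh (ball w₀ ε) ∧
        ∀ w ∈ ball w₀ ε ∩ (e.target ∩ e.symm ⁻¹' (A \ g ⁻¹' projZeroLocus Q)),
          u (e.symm w) = (((Fh w).re : ℝ) : EReal)) ∧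
    (∀ p ∈ A, u p ≤ (((d : ℝ) * η * Real.log ‖G p‖ : ℝ) : EReal)) ∧
    (∀ p ∈ A ∩ g ⁻¹' projZeroLocus Q, ∀ e ∈ RS.charts, p ∈ e.source →
      ∃ L : EReal, L ≠ ⊤ ∧
        Filter.Tendsto
          (fun w => u (e.symm w) -
            ((((min (gaussOrd RS x Q p) mlev : ℕ) : ℝ) *
              Real.log (‖w - e p‖) : ℝ) : EReal))
          (nhdsWithin (e p) {e p}ᶜ) (nhds L))

/-- The `S`-defect `δ^{S,m}_{g,A}(Q)` truncated at level `m`. -/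
def Sdefect (RS : RiemannSurface S) (x : S → EuclideanSpace ℝ (Fin (n+1)))
    (g : S → Pn n) (G : S → CVec n) (A : Set S) (mlev d : ℕ)
    (Q : MvPolynomial (Fin (n+1)) ℂ) : ℝ :=
  1 - sInf {η : ℝ | SdefCond RS x g G A mlev d Q η}

/-- The `H`-defect `δ^{H,m}_{g,A}(Q)` truncated at level `m`. -/
def Hdefect (RS : RiemannSurface S) (x : S → EuclideanSpace ℝ (Fin (n+1)))
    (g : S → Pn n) (G : S → CVec n) (A : Set S) (mlev d : ℕ)
    (Q : MvPolynomial (Fin (n+1)) ℂ) : ℝ :=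
  1 - sInf {η : ℝ | HdefCond RS x g G A mlev d Q η}

/-- Condition `(*)` in the definition of the modified `H`-defect `D^m_g(Q)`: there are a compact
`K ⊆ S`, a divisor `ν` with `ν > c > 0` on its support, and a bounded continuous `k` with mild
singularities on `S∖K` such that `[min{m,ν_{Q(g)}}] + [ν] = dη g*Ω + dd^c[log k²]` as currents. -/
def ModHCond (RS : RiemannSurface S) (x : S → EuclideanSpace ℝ (Fin (n+1)))
    (g : S → Pn n) (G : S → CVec n) (mlev d : ℕ)
    (Q : MvPolynomial (Fin (n+1)) ℂ) (η : ℝ) : Prop :=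
  ∃ Kc : Set S, IsCompact Kc ∧
  ∃ (ν : S → ℝ) (kf : S → ℝ) (c : ℝ), 0 < c ∧
    (∀ p, p ∉ Kc → ν p ≠ 0 → c < ν p) ∧
    (∀ p : S, ∃ U ∈ nhds p, ∀ z ∈ U, ν z ≠ 0 → z = p) ∧
    (∃ B : ℝ, ∀ p, |kf p| ≤ B) ∧
    ContinuousOn kf Kcᶜ ∧
    (∀ e ∈ RS.charts, MildSing (fun w => kf (e.symm w)) (e.target ∩ e.symm ⁻¹' Kcᶜ)) ∧
    (∀ e ∈ RS.charts, ∀ φ : ℂ → ℝ,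
      IsTestFun φ (e.target ∩ e.symm ⁻¹' Kcᶜ) →
      divPair (fun w => ((min (gaussOrd RS x Q (e.symm w)) mlev : ℕ) : ℝ)) φ
        + divPair (fun w => ν (e.symm w)) φ
      = (d : ℝ) * η * ddcPair (fun w => Real.log (‖G (e.symm w)‖^2)) φ
        + ddcPair (fun w => Real.log ((kf (e.symm w))^2)) φ)

/-- The modified `H`-defect `D^m_g(Q)` truncated at level `m`. -/
def ModHdefect (RS : RiemannSurface S) (x : S → EuclideanSpace ℝ (Fin (n+1)))
    (g : S → Pn n) (G : S → CVec n) (mlev d : ℕ)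
    (Q : MvPolynomial (Fin (n+1)) ℂ) : ℝ :=
  1 - sInf {t : ℝ | ∃ η : ℝ, t = 1 - η ∧ ModHCond RS x g G mlev d Q η}


private lemma finrank_sup_span_singleton_aux {E : Type*} [AddCommGroup E] [Module ℂ E]
    [FiniteDimensional ℂ E] (p : Submodule ℂ E) (v : E) (hv : v ∉ p) :
    Module.finrank ℂ ↥(p ⊔ Submodule.span ℂ {v}) = Module.finrank ℂ p + 1 := by
  have hv0 : v ≠ 0 := fun h => hv (h ▸ p.zero_mem)
  have hdisj : p ⊓ Submodule.span ℂ {v} = ⊥ := by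
    rw [eq_bot_iff]
    rintro x hx
    rw [Submodule.mem_inf] at hx
    obtain ⟨hxp, hxv⟩ := hx
    rw [Submodule.mem_span_singleton] at hxv
    obtain ⟨c, rfl⟩ := hxv
    rcases eq_or_ne c 0 with rfl | hc
    · simp
    · exact absurd (by simpa [smul_smul, inv_mul_cancel₀ hc] using p.smul_mem c⁻¹ hxp) hv
  have h := Submodule.finrank_sup_add_finrank_inf_eq p (Submodule.span ℂ {v})
  rw [hdisj, finrank_span_singleton hv0] at h
  simpa using h

private lemma exists_common_extension {E : Type*} [AddCommGroup E] [Module ℂ E]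
    [FiniteDimensional ℂ E] (𝒮 : Finset (Submodule ℂ E)) (c : ℕ)
    (hc : ∀ W ∈ 𝒮, Module.finrank ℂ W = c) :
    ∀ j, c + j ≤ Module.finrank ℂ E →
      ∃ t : Fin j → E, ∀ W ∈ 𝒮,
        Module.finrank ℂ ↥(W ⊔ Submodule.span ℂ (Set.range t)) = c + j := by
  intro j
  induction j with
  | zero =>
    intro _
    refine ⟨Fin.elim0, fun W hW => ?_⟩
    rw [Set.range_eq_empty, Submodule.span_empty, sup_bot_eq, hc W hW, Nat.add_zero]
  | succ j ih =>
    intro hle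
    obtain ⟨t, ht⟩ := ih (by omega)
    have htop : ⊤ ∉ 𝒮.image (fun W => W ⊔ Submodule.span ℂ (Set.range t)) := by
      simp only [Finset.mem_image, not_exists]
      rintro W ⟨hW, hWtop⟩
      have h1 := ht W hW
      rw [hWtop, finrank_top] at h1
      omega
    have hne := Subspace.biUnion_ne_univ_of_top_notMem htop
    rw [Set.ne_univ_iff_exists_notMem] at hne
    obtain ⟨v, hv⟩ := hne
    simp only [Set.mem_iUnion, not_exists, Finset.mem_image] at hv
    refine ⟨Fin.cons v t, fun W hW => ?_⟩
    have hvW : v ∉ W ⊔ Submodule.span ℂ (Set.range t) := by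
      intro hmem
      exact hv _ ⟨W, hW, rfl⟩ hmem
    rw [Fin.range_cons, Submodule.span_insert, ← sup_assoc, sup_comm W,
      sup_assoc, sup_comm (Submodule.span ℂ {v}),
      finrank_sup_span_singleton_aux _ v hvW, ht W hW]
    omega

/-- **Lemma 2.6.** Let `V ⊆ ℙⁿ(ℂ)` have dimension `k`, let `Q_1,…,Q_q` be hypersurfaces of
common degree `d` and `M = H_V(d) - 1`. There exist `M - k` hypersurfaces `T_1,…,T_{M-k}` of
degree `d` such that for every `R ⊆ {1,…,q}` with `♯R = k+1` and `rank {[Q_i]}_{i∈R} = k+1`,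
the family `{[Q_i]}_{i∈R} ∪ {[T_i]}` has rank `M+1` in `I_d(V)`. -/
theorem exists_completing_hypersurfaces
    (n k d q M : ℕ) (hkn : k ≤ n) (hd : 0 < d) (hkM : k ≤ M)
    (V : Set (Pn n)) (halg : IsAlgSet V) (hdim : HasDim V k)
    (Q : Fin q → MvPolynomial (Fin (n+1)) ℂ)
    (hdeg : ∀ i, Q i ∈ homogeneousSubmodule (Fin (n+1)) ℂ d)
    (hM : M + 1 = HV n d V) :
    ∃ T : Fin (M - k) → MvPolynomial (Fin (n+1)) ℂ,
      (∀ i, T i ∈ homogeneousSubmodule (Fin (n+1)) ℂ d) ∧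
      ∀ R : Finset (Fin q), R.card = k + 1 → clsRank n d V Q R = k + 1 →
        Module.finrank ℂ ↥(Submodule.span ℂ
          (((fun i => clsOf n d V (Q i)) '' R) ∪
            Set.range (fun i => clsOf n d V (T i)))) = M + 1 := by
  have hfr : Module.finrank ℂ (IdV n d V) = M + 1 := hM.symm
  have hfd : FiniteDimensional ℂ (IdV n d V) :=
    FiniteDimensional.of_finrank_pos (by omega)
  set 𝒮 : Finset (Submodule ℂ (IdV n d V)) :=
    (Finset.univ.filter
        (fun R : Finset (Fin q) => R.card = k+1 ∧ clsRank n d V Q R = k+1)).image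
      (fun R : Finset (Fin q) =>
        Submodule.span ℂ ((fun i => clsOf n d V (Q i)) '' (↑R : Set (Fin q)))) with h𝒮
  have hc : ∀ W ∈ 𝒮, Module.finrank ℂ W = k + 1 := by
    intro W hW
    simp only [h𝒮, Finset.mem_image, Finset.mem_filter] at hW
    obtain ⟨R, ⟨-, -, hrank⟩, rfl⟩ := hW
    exact hrank
  obtain ⟨t, ht⟩ := exists_common_extension 𝒮 (k+1) hc (M - k) (by omega)
  have hsurj := Submodule.Quotient.mk_surjective (vanishingSub n d V)
  choose P hP using fun i => hsurj (t i)
  refine ⟨fun i => (P i : MvPolynomial (Fin (n+1)) ℂ), fun i => (P i).2, ?_⟩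
  intro R hcard hrank
  have hcls : ∀ i, clsOf n d V ((P i : MvPolynomial (Fin (n+1)) ℂ)) = t i := by
    intro i
    show (if h : ((P i : MvPolynomial (Fin (n+1)) ℂ) ∈ homogeneousSubmodule (Fin (n+1)) ℂ d) then
      (Submodule.Quotient.mk ⟨_, h⟩ : (homogeneousSubmodule (Fin (n+1)) ℂ d) ⧸ vanishingSub n d V)
      else 0) = t i
    rw [dif_pos (P i).2]
    exact hP i
  have hW : Submodule.span ℂ ((fun i => clsOf n d V (Q i)) '' R) ∈ 𝒮 := by
    simp only [h𝒮, Finset.mem_image, Finset.mem_filter]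
    exact ⟨R, ⟨Finset.mem_univ R, hcard, hrank⟩, rfl⟩
  have hkey := ht _ hW
  rw [Submodule.span_union, show (fun i => clsOf n d V ((P i : MvPolynomial (Fin (n+1)) ℂ))) = t
    from funext hcls, hkey]
  omega
end
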